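/- arXiv:2105.09725 — 2 statements merged into one kernel-verified Lean document; each statement's English description precedes it below -/
import Mathlib

section
/- Let p be an odd prime and let ζ ∈ ℤ_pˣ be a unit of the p-adic integers whose reduction modulo p generates the cyclic group (ℤ/pℤ)ˣ. Then the closure (with respect to the p-adic topology) of the subgroup of GL₂(ℤ_p) generated by the four matrices P⁺ = [[1,1],[0,1]], P₋ = [[1,0],[1,1]], M_ζ = [[ζ,0],[0,1]], and P_{1+p} = [[1+p,0],[0,1]] is all of GL₂(ℤ_p). -/
/-!
Over a local ring, Gaussian elimination writes every element of `GL₂` as a product of a lower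
unipotent, a diagonal and an upper unipotent matrix, after possibly multiplying by the Weyl element
`[[0,-1],[1,0]]` (which is a product of unipotents and swaps the diagonal entries under
conjugation). So `GL₂` is generated by the unipotents and the matrices `diag(u, 1)`.

Let `H` be the closure of the given subgroup. The unipotents `[[1,x],[0,1]]` depend continuously
on `x` and `ℤ` is dense in `ℤ_p`, so `H` contains all of them, and likewise the lower ones. The
units `u` with `diag(u, 1) ∈ H` form a closed subgroup of `ℤ_pˣ` containing `ζ` and `1 + p`.
Modulo `p^(n+1)` the order of `1 + p` is `p^n` and that of `ζ` is a multiple of `p - 1`; these are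
coprime with product `|(ℤ/p^(n+1))ˣ|`, so the subgroup surjects onto every `(ℤ/p^(n+1))ˣ`, and
being closed it is all of `ℤ_pˣ`.
-/

open Matrix

namespace Matrix.GeneralLinearGroup

section Ring

variable {R : Type*} [Ring R]

@[simps apply]
def lowerLeftHom : AddChar R (GL (Fin 2) R) where
  toFun x := ⟨!![1, 0; x, 1], !![1, 0; -x, 1], by simp [one_fin_two], by simp [one_fin_two]⟩
  map_zero_eq_one' := by simp [Units.ext_iff, one_fin_two]
  map_add_eq_mul' a b := by simp [Units.ext_iff, add_comm]

@[simps apply]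
def diagonalHom : Rˣ × Rˣ →* GL (Fin 2) R where
  toFun u := ⟨!![(u.1 : R), 0; 0, u.2], !![↑u.1⁻¹, 0; 0, ↑u.2⁻¹], by simp [one_fin_two],
    by simp [one_fin_two]⟩
  map_one' := by simp [Units.ext_iff, one_fin_two]
  map_mul' u v := by simp [Units.ext_iff]

def weyl : GL (Fin 2) R := upperRightHom (-1) * lowerLeftHom 1 * upperRightHom (-1)

lemma val_weyl : ((weyl : GL (Fin 2) R) : Matrix (Fin 2) (Fin 2) R) = !![0, -1; 1, 0] := by
  simp [weyl]

lemma weyl_mul_diagonalHom (u v : Rˣ) :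
    weyl * diagonalHom (u, v) = diagonalHom (v, u) * (weyl : GL (Fin 2) R) := by
  simp [Units.ext_iff, val_weyl]

variable [TopologicalSpace R]

@[fun_prop]
lemma continuous_diagonalHom : Continuous (diagonalHom : Rˣ × Rˣ → GL (Fin 2) R) := by
  simp only [Units.continuous_iff, diagonalHom_apply]
  constructor <;> fun_prop

@[fun_prop]
lemma continuous_lowerLeftHom [IsTopologicalRing R] :
    Continuous (lowerLeftHom : R → GL (Fin 2) R) := by
  simp only [Units.continuous_iff, lowerLeftHom_apply]
  constructor <;> fun_prop

end Ring

section CommRing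

variable {R : Type*} [CommRing R]

lemma eq_lowerLeftHom_mul_diagonalHom_mul_upperRightHom (g : GL (Fin 2) R) (a : Rˣ)
    (ha : (g : Matrix (Fin 2) (Fin 2) R) 0 0 = a) :
    g = lowerLeftHom ((g : Matrix (Fin 2) (Fin 2) R) 1 0 * ↑a⁻¹) * diagonalHom (a, a⁻¹ * det g) *
      upperRightHom (↑a⁻¹ * (g : Matrix (Fin 2) (Fin 2) R) 0 1) := by
  ext i j
  fin_cases i <;> fin_cases j <;> simp [det_fin_two, ha]; grind [Units.inv_mul]

lemma isUnit_zero_zero_or_isUnit_one_zero [IsLocalRing R] (g : GL (Fin 2) R) :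
    IsUnit ((g : Matrix (Fin 2) (Fin 2) R) 0 0) ∨ IsUnit ((g : Matrix (Fin 2) (Fin 2) R) 1 0) := by
  have hdet := (det g).isUnit
  rw [val_det_apply, det_fin_two, sub_eq_add_neg] at hdet
  exact (IsLocalRing.isUnit_or_isUnit_of_isUnit_add hdet).imp isUnit_of_mul_isUnit_left
    fun h ↦ isUnit_of_mul_isUnit_right ((IsUnit.neg_iff _).mp h)

theorem eq_top_of_forall_upperRightHom_lowerLeftHom_diagonalHom_mem [IsLocalRing R]
    (H : Subgroup (GL (Fin 2) R)) (hE : ∀ x, upperRightHom x ∈ H) (hF : ∀ x, lowerLeftHom x ∈ H)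
    (hD : ∀ u, diagonalHom (u, 1) ∈ H) : H = ⊤ := by
  have hw : weyl ∈ H := mul_mem (mul_mem (hE _) (hF _)) (hE _)
  have hD' (u v : Rˣ) : diagonalHom (u, v) ∈ H := by
    have hswap : diagonalHom (1, v) = weyl * diagonalHom (v, 1) * (weyl : GL (Fin 2) R)⁻¹ := by
      rw [weyl_mul_diagonalHom, mul_inv_cancel_right]
    rw [← mul_one u, ← one_mul v, ← Prod.mk_mul_mk, map_mul, hswap]
    exact mul_mem (hD u) (mul_mem (mul_mem hw (hD v)) (inv_mem hw))
  have hLDU (g : GL (Fin 2) R) (hg : IsUnit ((g : Matrix (Fin 2) (Fin 2) R) 0 0)) : g ∈ H := by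
    obtain ⟨a, ha⟩ := hg
    rw [eq_lowerLeftHom_mul_diagonalHom_mul_upperRightHom g a ha.symm]
    exact mul_mem (mul_mem (hF _) (hD' _ _)) (hE _)
  refine eq_top_iff.mpr fun g _ ↦ ?_
  rcases isUnit_zero_zero_or_isUnit_one_zero g with hg | hg
  · exact hLDU g hg
  · have hwg : weyl * g ∈ H := hLDU _ (by simpa [val_weyl, vecMul, dotProduct] using hg.neg)
    simpa using mul_mem (inv_mem hw) hwg

end CommRing

end Matrix.GeneralLinearGroup

lemma AddChar.mem_of_denseRange_intCast {R G : Type*} [AddGroupWithOne R] [TopologicalSpace R]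
    [Group G] [TopologicalSpace G] (hR : DenseRange (Int.cast : ℤ → R)) (ψ : AddChar R G)
    (hψ : Continuous ψ) {H : Subgroup G} (hH : IsClosed (H : Set G)) (h1 : ψ 1 ∈ H) (x : R) :
    ψ x ∈ H := by
  refine hH.closure_subset (map_mem_closure hψ (hR x) ?_)
  rintro _ ⟨n, rfl⟩
  simpa [← ψ.map_zsmul_eq_zpow] using zpow_mem h1 n

lemma Subgroup.eq_top_of_coprime_dvd_orderOf {G : Type*} [Group G] [Finite G] {H : Subgroup G}
    {x y : G} (hx : x ∈ H) (hy : y ∈ H) {a b : ℕ} (ha : a ∣ orderOf x) (hb : b ∣ orderOf y)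
    (hab : a.Coprime b) (hcard : Nat.card G ≤ a * b) : H = ⊤ := by
  refine eq_top_of_le_card H (hcard.trans (Nat.le_of_dvd Nat.card_pos ?_))
  exact hab.mul_dvd_of_dvd_of_dvd (ha.trans (H.orderOf_dvd_natCard hx))
    (hb.trans (H.orderOf_dvd_natCard hy))

lemma ZMod.subgroup_units_prime_pow_eq_top {p : ℕ} [Fact p.Prime] (hp : p ≠ 2) (n : ℕ)
    {H : Subgroup (ZMod (p ^ (n + 1)))ˣ} {x y : (ZMod (p ^ (n + 1)))ˣ} (hx : x ∈ H)
    (hx1 : (x : ZMod (p ^ (n + 1))) = 1 + p) (hy : y ∈ H) (hy1 : p - 1 ∣ orderOf y) : H = ⊤ := by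
  have hp' : p.Prime := Fact.out
  refine H.eq_top_of_coprime_dvd_orderOf (a := p ^ n) hx hy ?_ hy1 ?_ ?_
  · rw [← orderOf_units, hx1, orderOf_one_add_prime hp' hp]
  · exact ((Nat.coprime_self_sub_right hp'.one_le).mpr p.coprime_one_right).pow_left n
  · rw [Nat.card_eq_fintype_card, ZMod.card_units_eq_totient, Nat.totient_prime_pow_succ hp']

namespace PadicInt

variable {p : ℕ} [Fact p.Prime]

lemma ringHom_eq_toZMod (f : ℤ_[p] →+* ZMod p) : f = toZMod :=
  ZMod.ringHom_eq_of_ker_eq _ _ <| by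
    rw [ker_toZMod, IsLocalRing.eq_maximalIdeal
      (RingHom.ker_isMaximal_of_surjective _ (ZMod.ringHom_surjective f))]

lemma mem_closure_of_eventually_toZModPow_eq {s : Set ℤ_[p]} {x : ℤ_[p]}
    (h : ∀ᶠ n in Filter.atTop, ∃ y ∈ s, toZModPow n y = toZModPow n x) : x ∈ closure s := by
  refine Metric.mem_closure_iff.mpr fun ε hε ↦ ?_
  obtain ⟨n₀, hn₀⟩ := exists_pow_neg_lt p hε
  obtain ⟨n, ⟨y, hys, hy⟩, hn⟩ := (h.and (Filter.eventually_ge_atTop n₀)).exists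
  have hxy : ‖x - y‖ ≤ (p : ℝ) ^ (-n : ℤ) := by
    rw [norm_le_pow_iff_mem_span_pow, ← ker_toZModPow, RingHom.mem_ker, map_sub, hy, sub_self]
  have hmono : (p : ℝ) ^ (-n : ℤ) ≤ (p : ℝ) ^ (-n₀ : ℤ) :=
    zpow_le_zpow_right₀ (mod_cast (Fact.out : p.Prime).one_le) (by omega)
  exact ⟨y, hys, (dist_eq_norm x y).trans_le (hxy.trans hmono) |>.trans_lt hn₀⟩

lemma units_subgroup_eq_top_of_isClosed {U : Subgroup ℤ_[p]ˣ} (hU : IsClosed (U : Set ℤ_[p]ˣ))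
    (h : ∀ᶠ n in Filter.atTop, U.map (Units.map (toZModPow (p := p) n).toMonoidHom) = ⊤) :
    U = ⊤ := by
  refine eq_top_iff.mpr fun u _ ↦ hU.closure_subset ?_
  rw [Units.isOpenEmbedding_val.isEmbedding.closure_eq_preimage_closure_image]
  refine mem_closure_of_eventually_toZModPow_eq (h.mono fun n hn ↦ ?_)
  obtain ⟨v, hvU, hv⟩ := hn.ge (Subgroup.mem_top (Units.map _ u))
  exact ⟨v, ⟨v, hvU, rfl⟩, congrArg Units.val hv⟩

lemma units_subgroup_eq_top_of_isClosed_of_mem (hp : p ≠ 2) {U : Subgroup ℤ_[p]ˣ}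
    (hU : IsClosed (U : Set ℤ_[p]ˣ)) {ζ : ℤ_[p]ˣ}
    (hζ : Subgroup.zpowers (Units.map (toZMod (p := p)).toMonoidHom ζ) = ⊤) (hζU : ζ ∈ U)
    {u : ℤ_[p]ˣ} (hu : (u : ℤ_[p]) = 1 + p) (huU : u ∈ U) : U = ⊤ := by
  have hζord : orderOf (Units.map (toZMod (p := p)).toMonoidHom ζ) = p - 1 := by
    rw [← Nat.card_zpowers, hζ, Subgroup.card_top, Nat.card_eq_fintype_card, ZMod.card_units]
  refine units_subgroup_eq_top_of_isClosed hU ((Filter.eventually_gt_atTop 0).mono fun k hk ↦ ?_)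
  obtain ⟨n, rfl⟩ := Nat.exists_eq_add_one_of_ne_zero hk.ne'
  let π : ℤ_[p]ˣ →* (ZMod (p ^ (n + 1)))ˣ := Units.map (toZModPow (n + 1)).toMonoidHom
  have hπζ : Units.map (toZMod (p := p)).toMonoidHom ζ =
      ZMod.unitsMap (dvd_pow_self p n.succ_ne_zero) (π ζ) := by
    rw [← ringHom_eq_toZMod ((ZMod.castHom (dvd_pow_self p n.succ_ne_zero) _).comp _)]
    rfl
  refine ZMod.subgroup_units_prime_pow_eq_top hp n (U.mem_map_of_mem π huU) ?_
    (U.mem_map_of_mem π hζU) ?_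
  · simp [π, hu]
  · exact hζord ▸ hπζ ▸ orderOf_map_dvd _ _

end PadicInt

open Matrix.GeneralLinearGroup in
theorem PadicInt.topologicalClosure_eq_top_of_generators_mem {p : ℕ} [Fact p.Prime] (hp : p ≠ 2)
    {ζ : ℤ_[p]ˣ} (hζ : Subgroup.zpowers (Units.map (toZMod (p := p)).toMonoidHom ζ) = ⊤)
    {u : ℤ_[p]ˣ} (hu : (u : ℤ_[p]) = 1 + p) {S : Subgroup (GL (Fin 2) ℤ_[p])}
    (hE : upperRightHom 1 ∈ S) (hF : lowerLeftHom 1 ∈ S) (hζS : diagonalHom (ζ, 1) ∈ S)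
    (huS : diagonalHom (u, 1) ∈ S) : S.topologicalClosure = ⊤ := by
  have hclosed : IsClosed (S.topologicalClosure : Set (GL (Fin 2) ℤ_[p])) :=
    S.isClosed_topologicalClosure
  have hD : S.topologicalClosure.comap (diagonalHom.comp (MonoidHom.inl _ _)) = ⊤ :=
    units_subgroup_eq_top_of_isClosed_of_mem hp (hclosed.preimage
      (continuous_diagonalHom.comp (continuous_id.prodMk continuous_const))) hζ
      (S.le_topologicalClosure hζS) hu (S.le_topologicalClosure huS)
  refine eq_top_of_forall_upperRightHom_lowerLeftHom_diagonalHom_mem _ ?_ ?_ fun v ↦ ?_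
  · exact upperRightHom.mem_of_denseRange_intCast denseRange_intCast
      continuous_upperRightHom hclosed (S.le_topologicalClosure hE)
  · exact lowerLeftHom.mem_of_denseRange_intCast denseRange_intCast
      continuous_lowerLeftHom hclosed (S.le_topologicalClosure hF)
  · exact hD.ge (Subgroup.mem_top v)

open Matrix.GeneralLinearGroup in
/-- Let `p` be an odd prime and `ζ ∈ ℤ_pˣ` a unit whose reduction mod `p`
generates `(ℤ/pℤ)ˣ`. Then the topological closure of the subgroup of `GL₂(ℤ_p)` generated by
`P⁺ = [[1,1],[0,1]]`, `P₋ = [[1,0],[1,1]]`, `M_ζ = [[ζ,0],[0,1]]` and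
`P_{1+p} = [[1+p,0],[0,1]]` is all of `GL₂(ℤ_p)`. -/
theorem stmt_1 (p : ℕ) [Fact p.Prime] (hp : p ≠ 2) (ζ : ℤ_[p]ˣ)
    (hζ : Subgroup.zpowers (Units.map (PadicInt.toZMod (p := p)).toMonoidHom ζ) = ⊤) :
    (Subgroup.closure {g : GL (Fin 2) ℤ_[p] |
        (g : Matrix (Fin 2) (Fin 2) ℤ_[p]) ∈
          ({!![1, 1; 0, 1], !![1, 0; 1, 1], !![(ζ : ℤ_[p]), 0; 0, 1],
            !![1 + (p : ℤ_[p]), 0; 0, 1]} :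
            Set (Matrix (Fin 2) (Fin 2) ℤ_[p]))}).topologicalClosure = ⊤ := by
  obtain ⟨u, hu⟩ : IsUnit (1 + (p : ℤ_[p])) := by
    simpa using IsLocalRing.isUnit_one_sub_self_of_mem_nonunits (-(p : ℤ_[p]))
      (by simpa using PadicInt.p_nonunit (p := p))
  refine PadicInt.topologicalClosure_eq_top_of_generators_mem hp hζ hu ?_ ?_ ?_ ?_ <;>
    exact Subgroup.subset_closure (by simp [hu])
end

section
/- Let p be a prime and N a positive integer. The closure, in GL_N(ℤ_p) with the p-adic topology, of the image of GL_N(ℤ) under the natural map induced by the ring homomorphism ℤ → ℤ_p applied entrywise, equals the subgroup {g ∈ GL_N(ℤ_p) : det g = 1 or det g = −1}. -/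
/-!
Over a local ring every matrix of determinant one is a product of elementary transvections.
Reduce the columns one at a time: among the rows of a column not yet reduced some entry is a
unit, since a sum equal to `1` in a local ring has a unit term; one or two row operations turn
the pivot into `1` (for the last column the pivot already equals the determinant), and then it
clears its column. Since `ℤ` is dense in `ℤ_p`, every `p`-adic transvection is a limit of integral
ones, so the closure of the image of `GL_N(ℤ)`, a closed subgroup, contains `SL_N(ℤ_p)`; an
integral matrix of determinant `-1` supplies the other coset. Conversely the determinant is
continuous and `{1, -1}` is closed.
-/

open Matrix

namespace Matrix

variable {n R : Type*} [Fintype n] [DecidableEq n] [CommRing R]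

def ColsEqOneOutside (U : Finset n) (x : Matrix n n R) : Prop :=
  ∀ a, ∀ b ∉ U, x a b = (1 : Matrix n n R) a b

theorem ColsEqOneOutside.transvection_mul {U : Finset n} {x : Matrix n n R}
    (hx : ColsEqOneOutside U x) {k : n} (hk : k ∈ U) (a : n) (c : R) :
    ColsEqOneOutside U (transvection a k c * x) := by
  intro b s hs
  have hks : x k s = 0 := by rw [hx k s hs, one_apply_ne (ne_of_mem_of_not_mem hk hs)]
  by_cases hb : b = a
  · rw [hb, transvection_mul_apply_same, hks, mul_zero, add_zero, hx a s hs]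
  · rw [transvection_mul_apply_of_ne _ _ _ _ hb, hx b s hs]

theorem det_eq_apply_of_colsEqOneOutside_singleton {j : n} {x : Matrix n n R}
    (hx : ColsEqOneOutside {j} x) : x.det = x j j := by
  have hupd : x = (1 : Matrix n n R).updateCol j
      fun a => ∑ b, x b j • (1 : Matrix n n R) a b := by
    ext a b
    by_cases hb : b = j
    · subst hb; simp [one_apply]
    · rw [updateCol_ne hb, hx a b (by simpa using hb)]
  rw [hupd, det_updateCol_sum, det_one, smul_eq_mul, mul_one]
  simp [one_apply]

end Matrix

namespace Matrix.SpecialLinearGroup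

variable (n R : Type*) [Fintype n] [DecidableEq n] [CommRing R]

def elementarySubgroup : Subgroup (SpecialLinearGroup n R) :=
  Subgroup.closure {t | ∃ (i j : n) (hij : i ≠ j) (c : R), transvection hij c = t}

variable {n R}

theorem coe_transvection {i j : n} (hij : i ≠ j) (c : R) :
    (transvection hij c : Matrix n n R) = Matrix.transvection i j c :=
  rfl

theorem transvection_mem_elementarySubgroup {i j : n} (hij : i ≠ j) (c : R) :
    transvection hij c ∈ elementarySubgroup n R :=
  Subgroup.subset_closure ⟨i, j, hij, c, rfl⟩

theorem exists_isUnit_apply_of_colsEqOneOutside [IsLocalRing R] {U : Finset n}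
    {x : SpecialLinearGroup n R} (hx : ColsEqOneOutside U (x : Matrix n n R)) {j : n}
    (hj : j ∈ U) : ∃ k ∈ U, IsUnit (x k j) := by
  have hone : ((x⁻¹ : SpecialLinearGroup n R) : Matrix n n R) * x = 1 := by
    rw [← coe_mul, inv_mul_cancel, coe_one]
  have hinv : ∀ k ∉ U, (x⁻¹ : SpecialLinearGroup n R) j k = 0 := by
    intro k hk
    have h := congr_fun₂ hone j k
    rw [mul_apply] at h
    simp_rw [hx _ k hk] at h
    rwa [← mul_apply, Matrix.mul_one, one_apply_ne (ne_of_mem_of_not_mem hj hk)] at h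
  have hsum : ∑ k ∈ U, (x⁻¹ : SpecialLinearGroup n R) j k * x k j = 1 := by
    have h := congr_fun₂ hone j j
    rwa [mul_apply, one_apply_eq,
      ← Finset.sum_subset (Finset.subset_univ U) fun k _ hk => by rw [hinv k hk, zero_mul]] at h
  obtain ⟨k, hk, hunit⟩ := IsLocalRing.exists_of_isUnit_sum (hsum ▸ isUnit_one)
  exact ⟨k, hk, isUnit_of_mul_isUnit_right hunit⟩

theorem exists_mul_apply_eq_one {U : Finset n} {x : SpecialLinearGroup n R}
    (hx : ColsEqOneOutside U (x : Matrix n n R)) {a k j : n} (hk : k ∈ U) (hak : a ≠ k)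
    (hunit : IsUnit (x k j)) :
    ∃ e ∈ elementarySubgroup n R,
      ColsEqOneOutside U ((e * x : SpecialLinearGroup n R) : Matrix n n R) ∧ (e * x) a j = 1 := by
  refine ⟨transvection hak ((1 - x a j) * hunit.unit⁻¹),
    transvection_mem_elementarySubgroup _ _, ?_, ?_⟩
  · rw [coe_mul, coe_transvection]
    exact hx.transvection_mul hk a _
  · rw [coe_mul, coe_transvection, transvection_mul_apply_same, mul_assoc, IsUnit.val_inv_mul,
      mul_one, add_sub_cancel]

theorem exists_mul_apply_self_eq_one [IsLocalRing R] {T : Finset n} {j : n} (hj : j ∉ T)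
    {x : SpecialLinearGroup n R} (hx : ColsEqOneOutside (insert j T) (x : Matrix n n R)) :
    ∃ e ∈ elementarySubgroup n R,
      ColsEqOneOutside (insert j T) ((e * x : SpecialLinearGroup n R) : Matrix n n R) ∧
        (e * x) j j = 1 := by
  rcases T.eq_empty_or_nonempty with rfl | ⟨i, hi⟩
  · refine ⟨1, one_mem _, by rwa [one_mul], ?_⟩
    rw [one_mul, ← det_eq_apply_of_colsEqOneOutside_singleton hx, x.det_coe]
  obtain ⟨k, hk, hunit⟩ :=
    exists_isUnit_apply_of_colsEqOneOutside hx (Finset.mem_insert_self j T)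
  by_cases hkj : k = j
  · -- first move a unit into row `i`, then use it to turn the pivot into `1`
    subst hkj
    have hik : i ≠ k := fun h => hj (h ▸ hi)
    obtain ⟨e, he, hex, hei⟩ := exists_mul_apply_eq_one hx hk hik hunit
    obtain ⟨e', he', hex', he'k⟩ := exists_mul_apply_eq_one hex (Finset.mem_insert_of_mem hi)
      hik.symm (hei ▸ isUnit_one)
    exact ⟨e' * e, mul_mem he' he, by rwa [mul_assoc], by rwa [mul_assoc]⟩
  · exact exists_mul_apply_eq_one hx hk (Ne.symm hkj) hunit

theorem exists_mul_colsEqOneOutside_erase {U : Finset n} {j : n} (hj : j ∈ U)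
    {x : SpecialLinearGroup n R} (hx : ColsEqOneOutside U (x : Matrix n n R)) (hjj : x j j = 1) :
    ∃ e ∈ elementarySubgroup n R,
      ColsEqOneOutside (U.erase j) ((e * x : SpecialLinearGroup n R) : Matrix n n R) := by
  suffices key : ∀ (A : Finset n) (x : SpecialLinearGroup n R),
      ColsEqOneOutside U (x : Matrix n n R) → x j j = 1 → (∀ a ∉ A, a ≠ j → x a j = 0) →
      ∃ e ∈ elementarySubgroup n R,
        ColsEqOneOutside (U.erase j) ((e * x : SpecialLinearGroup n R) : Matrix n n R) from
    key Finset.univ x hx hjj fun a ha => absurd (Finset.mem_univ a) ha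
  intro A
  induction A using Finset.induction_on with
  | empty =>
    intro x hx hjj hzero
    refine ⟨1, one_mem _, ?_⟩
    rw [one_mul]
    intro a b hb
    rcases eq_or_ne b j with rfl | hbj
    · rcases eq_or_ne a b with rfl | hab
      · rw [hjj, one_apply_eq]
      · rw [hzero a (Finset.notMem_empty a) hab, one_apply_ne hab]
    · exact hx a b fun h => hb (Finset.mem_erase.2 ⟨hbj, h⟩)
  | insert b A _ IH =>
    intro x hx hjj hzero
    rcases eq_or_ne b j with rfl | hbj
    · exact IH x hx hjj fun a ha haj => hzero a (by simp [ha, haj]) haj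
    have hrow : ∀ a, a ≠ b → ((transvection hbj (-x b j) * x : SpecialLinearGroup n R) :
        Matrix n n R) a j = x a j := fun a hab => by
      rw [coe_mul, coe_transvection, transvection_mul_apply_of_ne _ _ _ _ hab]
    obtain ⟨e, he, hex⟩ := IH (transvection hbj (-x b j) * x)
      (by rw [coe_mul, coe_transvection]; exact hx.transvection_mul hj b _)
      (by rw [hrow j hbj.symm, hjj])
      (fun a ha haj => by
        rcases eq_or_ne a b with rfl | hab
        · rw [coe_mul, coe_transvection, transvection_mul_apply_same, hjj, mul_one,
            add_neg_cancel]
        · rw [hrow a hab, hzero a (by simp [ha, hab]) haj])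
    exact ⟨e * transvection hbj (-x b j), mul_mem he (transvection_mem_elementarySubgroup _ _),
      by rwa [mul_assoc]⟩

theorem mem_elementarySubgroup_of_colsEqOneOutside [IsLocalRing R] (U : Finset n) :
    ∀ x : SpecialLinearGroup n R, ColsEqOneOutside U (x : Matrix n n R) →
      x ∈ elementarySubgroup n R := by
  induction U using Finset.induction_on with
  | empty =>
    intro x hx
    have : x = 1 := Subtype.ext <| Matrix.ext fun a b => hx a b (Finset.notMem_empty b)
    exact this ▸ one_mem _
  | insert j T hjT IH =>
    intro x hx
    obtain ⟨e, he, hex, hejj⟩ := exists_mul_apply_self_eq_one hjT hx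
    obtain ⟨e', he', hex'⟩ :=
      exists_mul_colsEqOneOutside_erase (Finset.mem_insert_self j T) hex hejj
    rw [Finset.erase_insert hjT] at hex'
    have hmem := IH _ hex'
    rwa [← mul_assoc, mul_mem_cancel_left (mul_mem he' he)] at hmem

theorem elementarySubgroup_eq_top [IsLocalRing R] : elementarySubgroup n R = ⊤ :=
  eq_top_iff.2 fun x _ => mem_elementarySubgroup_of_colsEqOneOutside Finset.univ x
    fun _ b hb => absurd (Finset.mem_univ b) hb

end Matrix.SpecialLinearGroup

section Topology

variable {n R : Type*} [DecidableEq n] [CommRing R] [TopologicalSpace R] [IsTopologicalRing R]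

theorem Matrix.continuous_transvection (i j : n) :
    Continuous fun c : R => Matrix.transvection i j c :=
  continuous_const.add <| continuous_matrix fun a b => by
    simp only [single_apply]
    split_ifs <;> fun_prop

variable [Fintype n]

theorem Matrix.SpecialLinearGroup.continuous_toGL_transvection {i j : n} (hij : i ≠ j) :
    Continuous fun c : R => toGL (transvection hij c) := by
  refine Units.continuous_iff.2 ⟨continuous_transvection i j, ?_⟩
  simp only [← map_inv, transvection_inv]
  exact (continuous_transvection i j).comp continuous_neg

omit [TopologicalSpace R] [IsTopologicalRing R] in
theorem RingHom.mapMatrix_transvection {S : Type*} [CommRing S] (f : R →+* S) (i j : n) (c : R) :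
    f.mapMatrix (Matrix.transvection i j c) = Matrix.transvection i j (f c) := by
  rw [Matrix.transvection, map_add, map_one, RingHom.mapMatrix_apply, map_single,
    Matrix.transvection]

namespace Matrix.GeneralLinearGroup

theorem exists_det_eq_neg_one (n : Type*) [Fintype n] [DecidableEq n] [Nonempty n] :
    ∃ A : GL n ℤ, (A : Matrix n n ℤ).det = -1 := by
  obtain ⟨i⟩ := ‹Nonempty n›
  let D : Matrix n n ℤ := diagonal (Function.update 1 i (-1))
  have hdet : D.det = -1 := by simp [D, det_diagonal, Finset.prod_update_of_mem]
  exact ⟨((isUnit_iff_isUnit_det D).2 (hdet ▸ isUnit_one.neg)).unit, hdet⟩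

theorem toGL_mem_topologicalClosure_range_map_intCast [IsLocalRing R]
    (hdense : DenseRange (Int.cast : ℤ → R)) (x : SpecialLinearGroup n R) :
    SpecialLinearGroup.toGL x ∈ (map (n := n) (Int.castRingHom R)).range.topologicalClosure := by
  set K := (map (n := n) (Int.castRingHom R)).range
  suffices hE : SpecialLinearGroup.elementarySubgroup n R ≤
      K.topologicalClosure.comap SpecialLinearGroup.toGL by
    exact hE (SpecialLinearGroup.elementarySubgroup_eq_top (n := n) (R := R) ▸ Subgroup.mem_top x)
  refine (Subgroup.closure_le _).2 ?_
  rintro _ ⟨i, j, hij, c, rfl⟩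
  refine hdense.induction_on c
    (K.isClosed_topologicalClosure.preimage (SpecialLinearGroup.continuous_toGL_transvection hij))
    fun m => K.le_topologicalClosure
      ⟨SpecialLinearGroup.toGL (SpecialLinearGroup.transvection hij m), ?_⟩
  ext : 1
  exact (RingHom.mapMatrix_transvection _ i j m).trans (by rw [eq_intCast]; rfl)

theorem closure_range_map_intCast_eq_det_eq_one_or_neg_one [T1Space R] [IsLocalRing R]
    (hdense : DenseRange (Int.cast : ℤ → R)) :
    closure (Set.range (map (n := n) (Int.castRingHom R))) =
      {g : GL n R | (g : Matrix n n R).det = 1 ∨ (g : Matrix n n R).det = -1} := by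
  have hdet_map : ∀ A : GL n ℤ, (map (Int.castRingHom R) A : Matrix n n R).det =
      ((A : Matrix n n ℤ).det : R) := fun A => (RingHom.map_det _ _).symm
  apply subset_antisymm
  · refine closure_minimal ?_ ((isClosed_singleton.union isClosed_singleton).preimage
      (Units.continuous_val.matrix_det))
    rintro _ ⟨A, rfl⟩
    rcases Int.isUnit_iff.1 ((isUnit_iff_isUnit_det _).1 A.isUnit) with h | h <;>
      simp only [Set.mem_ofPred_eq, hdet_map, h, Int.cast_one, Int.cast_neg, true_or, or_true]
  intro g hg
  rw [← MonoidHom.coe_range, ← Subgroup.topologicalClosure_coe, SetLike.mem_coe]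
  by_cases h1 : (g : Matrix n n R).det = 1
  · have hx := toGL_mem_topologicalClosure_range_map_intCast hdense
      (⟨g, h1⟩ : SpecialLinearGroup n R)
    rwa [(Units.ext rfl : SpecialLinearGroup.toGL ⟨g, h1⟩ = g)] at hx
  have : Nonempty n := by
    by_contra h
    have := not_nonempty_iff.1 h
    exact h1 det_isEmpty
  obtain ⟨A, hA⟩ := exists_det_eq_neg_one n
  have hgA : (↑(g * map (Int.castRingHom R) A) : Matrix n n R).det = 1 := by
    rw [Units.val_mul, det_mul, hdet_map, hA, hg.resolve_left h1]
    norm_num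
  have hmem := mul_mem (toGL_mem_topologicalClosure_range_map_intCast hdense ⟨_, hgA⟩)
    ((map (Int.castRingHom R)).range.le_topologicalClosure ⟨A⁻¹, rfl⟩)
  rwa [(Units.ext rfl : SpecialLinearGroup.toGL ⟨_, hgA⟩ = g * map (Int.castRingHom R) A),
    map_inv, mul_inv_cancel_right] at hmem

end Matrix.GeneralLinearGroup

end Topology

theorem stmt_8_general (p N : ℕ) [Fact p.Prime] :
    closure (Set.range
        (Units.map (RingHom.mapMatrix (Int.castRingHom ℤ_[p])).toMonoidHom :
          GL (Fin N) ℤ →* GL (Fin N) ℤ_[p])) =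
      {g : GL (Fin N) ℤ_[p] |
        (g : Matrix (Fin N) (Fin N) ℤ_[p]).det = 1 ∨
        (g : Matrix (Fin N) (Fin N) ℤ_[p]).det = -1} :=
  Matrix.GeneralLinearGroup.closure_range_map_intCast_eq_det_eq_one_or_neg_one
    PadicInt.denseRange_intCast

/-- The closure in `GL_N(ℤ_p)` of the image of `GL_N(ℤ)` (entrywise
`ℤ → ℤ_p`) equals `{g ∈ GL_N(ℤ_p) | det g = 1 or det g = -1}`. -/
theorem stmt_8 (p N : ℕ) [Fact p.Prime] (hN : 0 < N) :
    closure (Set.range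
        (Units.map (RingHom.mapMatrix (Int.castRingHom ℤ_[p])).toMonoidHom :
          GL (Fin N) ℤ →* GL (Fin N) ℤ_[p])) =
      {g : GL (Fin N) ℤ_[p] |
        (g : Matrix (Fin N) (Fin N) ℤ_[p]).det = 1 ∨
        (g : Matrix (Fin N) (Fin N) ℤ_[p]).det = -1} :=
  stmt_8_general p N
end
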